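/- Interaction $L^2$ energy estimate for two interfaces: Let $C_\infty \in \mathbb{R}$ and let $f, g : \mathbb{R}^2 \to \mathbb{R}$ be differentiable with $f - C_\infty \in L^2(\mathbb{R}^2)$, $\nabla f$ and $\nabla g$ bounded, and $D := \sup_{x,y} d(f,g)(x,y) < \infty$. Then there is a universal constant $C$ such that $\int_{\mathbb{R}^2} \int_{\mathbb{R}^2} |f(x) - C_\infty|^2 \, \frac{|f(x) - g(x-y)| \, |(\nabla f(x) - \nabla g(x-y)) \cdot y|}{[|y|^2 + (f(x) - g(x-y))^2]^{5/2}}\, dx\, dy \le C\, \|f - C_\infty\|_{L^2}^2 \, \big(\sup_x|\nabla f(x)| + \sup_x|\nabla g(x)|\big) \, (D^3 + 1)$. -/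

import Mathlib

open MeasureTheory Filter Topology Real Set
open scoped RealInnerProductSpace ENNReal

noncomputable section

abbrev E2 := EuclideanSpace ℝ (Fin 2)

/-- `d(f,g)(x,y) = [|y|² + (f(x)-g(x-y))²]^{-1/2}`. -/
def dd (f g : E2 → ℝ) (x y : E2) : ℝ :=
  (‖y‖ ^ 2 + (f x - g (x - y)) ^ 2) ^ (-(1 / 2 : ℝ))

/-- The `L²(ℝ²)` norm of a function. -/
def l2norm (h : E2 → ℝ) : ℝ := (∫ x : E2, (h x) ^ 2) ^ (1 / 2 : ℝ)

/-!
Write `s = |y|² + (f(x) - g(x-y))²` and `M = sup|∇f| + sup|∇g|`. By Cauchy–Schwarz and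
`2ab ≤ a² + b²`, the numerator `|f(x) - g(x-y)| |(∇f(x) - ∇g(x-y))⬝y|` is at most `M s`, so the
kernel is at most `M s^{-3/2}`. Where `s ≤ 1` the assumption `s^{-1/2} ≤ D` bounds this by
`M D³`, and where `s ≥ 1` it is at most `2^{3/2} M (1+|y|²)^{-3/2}` because `|y|² ≤ s`. Thus
the integrand is dominated by `|f(x) - C∞|²` times a multiple of `(1+|y|²)^{-3/2}`, which is
integrable on `ℝ²`, and the double integral factorises.
-/

lemma abs_mul_abs_inner_div_rpow_le {E : Type*} [NormedAddCommGroup E] [InnerProductSpace ℝ E]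
    (d : ℝ) (v y : E) :
    |d| * |⟪v, y⟫| / (‖y‖ ^ 2 + d ^ 2) ^ (5 / 2 : ℝ) ≤
      ‖v‖ * (‖y‖ ^ 2 + d ^ 2) ^ (-(3 : ℝ) / 2) := by
  set s := ‖y‖ ^ 2 + d ^ 2
  have hs : 0 ≤ s := by positivity
  have hnum : |d| * |⟪v, y⟫| ≤ ‖v‖ * s :=
    calc |d| * |⟪v, y⟫| ≤ |d| * (‖v‖ * ‖y‖) :=
          mul_le_mul_of_nonneg_left (abs_real_inner_le_norm v y) (abs_nonneg d)
      _ = ‖v‖ * (|d| * ‖y‖) := by ring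
      _ ≤ ‖v‖ * s := by
          gcongr
          nlinarith [two_mul_le_add_sq |d| ‖y‖, sq_abs d, abs_nonneg d, norm_nonneg y]
  rcases hs.eq_or_lt with hs0 | hspos
  · simp [← hs0, Real.zero_rpow]
  calc |d| * |⟪v, y⟫| / s ^ (5 / 2 : ℝ) ≤ ‖v‖ * s / s ^ (5 / 2 : ℝ) := by gcongr
    _ = ‖v‖ * s ^ (-(3 : ℝ) / 2) := by
        rw [mul_div_assoc, ← Real.rpow_one_sub' hs (by norm_num)]
        norm_num

lemma rpow_neg_three_halves_le {s u D : ℝ} (hs : 0 ≤ s) (hus : u ^ 2 ≤ s)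
    (hD : s ^ (-(1 / 2 : ℝ)) ≤ D) :
    s ^ (-(3 : ℝ) / 2) ≤ 2 ^ ((3 : ℝ) / 2) * (D ^ 3 + 1) * (1 + u ^ 2) ^ (-(3 : ℝ) / 2) := by
  have hD0 : 0 ≤ D := (Real.rpow_nonneg hs _).trans hD
  have hu : (0 : ℝ) < 1 + u ^ 2 := by positivity
  have htwo : 2 ^ ((3 : ℝ) / 2) * (1 + u ^ 2) ^ (-(3 : ℝ) / 2) =
      ((1 + u ^ 2) / 2) ^ (-(3 : ℝ) / 2) := by
    rw [Real.div_rpow hu.le zero_le_two, neg_div, Real.rpow_neg zero_le_two, div_inv_eq_mul,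
      mul_comm]
  have hw0 : 0 ≤ ((1 + u ^ 2) / 2) ^ (-(3 : ℝ) / 2) := by positivity
  rw [mul_comm _ (D ^ 3 + 1), mul_assoc, htwo]
  rcases le_or_gt s 1 with hs1 | hs1
  · have hcube : s ^ (-(3 : ℝ) / 2) ≤ D ^ 3 := by
      rw [show (-(3 : ℝ) / 2) = -(1 / 2) * (3 : ℕ) by norm_num, Real.rpow_mul hs,
        Real.rpow_natCast]
      exact pow_le_pow_left₀ (Real.rpow_nonneg hs _) hD 3
    have hone : 1 ≤ ((1 + u ^ 2) / 2) ^ (-(3 : ℝ) / 2) :=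
      Real.one_le_rpow_of_pos_of_le_one_of_nonpos (by positivity) (by linarith) (by norm_num)
    nlinarith [pow_nonneg hD0 3]
  · have hmono : s ^ (-(3 : ℝ) / 2) ≤ ((1 + u ^ 2) / 2) ^ (-(3 : ℝ) / 2) :=
      Real.rpow_le_rpow_of_nonpos (by positivity) (by linarith) (by norm_num)
    nlinarith [pow_nonneg hD0 3]

lemma abs_mul_abs_inner_div_rpow_le_weight {E : Type*} [NormedAddCommGroup E]
    [InnerProductSpace ℝ E] {d M D : ℝ} {v y : E} (hv : ‖v‖ ≤ M)
    (hD : (‖y‖ ^ 2 + d ^ 2) ^ (-(1 / 2 : ℝ)) ≤ D) :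
    |d| * |⟪v, y⟫| / (‖y‖ ^ 2 + d ^ 2) ^ (5 / 2 : ℝ) ≤
      M * (2 ^ ((3 : ℝ) / 2) * (D ^ 3 + 1)) * (1 + ‖y‖ ^ 2) ^ (-(3 : ℝ) / 2) := by
  rw [mul_assoc M]
  refine (abs_mul_abs_inner_div_rpow_le d v y).trans
    (mul_le_mul hv ?_ (by positivity) ((norm_nonneg v).trans hv))
  exact rpow_neg_three_halves_le (by positivity) (le_add_of_nonneg_right (sq_nonneg d)) hD

lemma interaction_integrand_le {f g : E2 → ℝ} {c M D : ℝ} {x y : E2}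
    (hM : ‖gradient f x - gradient g (x - y)‖ ≤ M) (hD : dd f g x y ≤ D) :
    |f x - c| ^ 2 * (|f x - g (x - y)| * |⟪gradient f x - gradient g (x - y), y⟫|) /
        (‖y‖ ^ 2 + (f x - g (x - y)) ^ 2) ^ (5 / 2 : ℝ) ≤
      (f x - c) ^ 2 *
        (M * (2 ^ ((3 : ℝ) / 2) * (D ^ 3 + 1)) * (1 + ‖y‖ ^ 2) ^ (-(3 : ℝ) / 2)) := by
  rw [mul_div_assoc, sq_abs]
  exact mul_le_mul_of_nonneg_left (abs_mul_abs_inner_div_rpow_le_weight hM hD) (sq_nonneg _)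

lemma lintegral_lintegral_ofReal_le_of_le_mul {α β : Type*} [MeasurableSpace α]
    [MeasurableSpace β] {μ : Measure α} {ν : Measure β} {F : β → α → ℝ} {a : α → ℝ}
    {b : β → ℝ} (ha : Integrable a μ) (hb : Integrable b ν) (ha0 : 0 ≤ a) (hb0 : 0 ≤ b)
    (hF : ∀ y x, F y x ≤ a x * b y) :
    ∫⁻ y, ∫⁻ x, ENNReal.ofReal (F y x) ∂μ ∂ν ≤
      ENNReal.ofReal ((∫ x, a x ∂μ) * ∫ y, b y ∂ν) := by
  have hA := ofReal_integral_eq_lintegral_ofReal ha (ae_of_all _ ha0)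
  have hB := ofReal_integral_eq_lintegral_ofReal hb (ae_of_all _ hb0)
  calc ∫⁻ y, ∫⁻ x, ENNReal.ofReal (F y x) ∂μ ∂ν
      ≤ ∫⁻ y, ∫⁻ x, ENNReal.ofReal (a x) * ENNReal.ofReal (b y) ∂μ ∂ν :=
        lintegral_mono fun y => lintegral_mono fun x =>
          (ENNReal.ofReal_le_ofReal (hF y x)).trans_eq (ENNReal.ofReal_mul (ha0 x))
    _ = (∫⁻ x, ENNReal.ofReal (a x) ∂μ) * ∫⁻ y, ENNReal.ofReal (b y) ∂ν := by
        simp_rw [lintegral_mul_const' _ _ ENNReal.ofReal_ne_top]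
        exact lintegral_const_mul' _ _ (hA ▸ ENNReal.ofReal_ne_top)
    _ = _ := by rw [← hA, ← hB, ENNReal.ofReal_mul (integral_nonneg ha0)]

lemma l2norm_sq (h : E2 → ℝ) : l2norm h ^ 2 = ∫ x, h x ^ 2 := by
  rw [l2norm, ← Real.rpow_natCast, ← Real.rpow_mul (integral_nonneg fun x => sq_nonneg (h x))]
  norm_num

/-- **Interaction `L²` energy estimate for two interfaces.**  There is a universal constant
`C` such that whenever `f, g` are differentiable with bounded gradients, `f - C∞ ∈ L²`, and
`D = sup d(f,g) < ∞`,
`∫∫ |f(x)-C∞|² |f(x)-g(x-y)| |(∇f(x)-∇g(x-y))⬝y| / [|y|²+(f(x)-g(x-y))²]^{5/2} dx dy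
  ≤ C ‖f-C∞‖²_{L²} (sup|∇f| + sup|∇g|)(D³+1)`. -/
theorem interaction_L2_energy_estimate :
    ∃ C : ℝ, 0 < C ∧ ∀ (Cinf : ℝ) (f g : E2 → ℝ),
      Differentiable ℝ f → Differentiable ℝ g →
      MemLp (fun x => f x - Cinf) 2 volume →
      BddAbove (Set.range fun x => ‖gradient f x‖) →
      BddAbove (Set.range fun x => ‖gradient g x‖) →
      BddAbove (Set.range fun p : E2 × E2 => dd f g p.1 p.2) →
      (∫⁻ y : E2, ∫⁻ x : E2, ENNReal.ofReal
          (|f x - Cinf| ^ 2 * (|f x - g (x - y)| *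
            |⟪gradient f x - gradient g (x - y), y⟫|) /
            (‖y‖ ^ 2 + (f x - g (x - y)) ^ 2) ^ (5 / 2 : ℝ))) ≤
        ENNReal.ofReal (C * l2norm (fun x => f x - Cinf) ^ 2 *
          ((⨆ x : E2, ‖gradient f x‖) + ⨆ x : E2, ‖gradient g x‖) *
          ((⨆ p : E2 × E2, dd f g p.1 p.2) ^ 3 + 1)) := by
  set w : E2 → ℝ := fun y => (1 + ‖y‖ ^ 2) ^ (-(3 : ℝ) / 2)
  have hw : Integrable w := by
    simpa [w, neg_div] using integrable_rpow_neg_one_add_norm_sq (E := E2) (μ := volume)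
      (r := 3) (by rw [finrank_euclideanSpace_fin]; norm_num)
  have hw0 : 0 ≤ ∫ y, w y := integral_nonneg fun y => by positivity
  refine ⟨2 ^ ((3 : ℝ) / 2) * (∫ y, w y) + 1,
    add_pos_of_nonneg_of_pos (mul_nonneg (Real.rpow_nonneg zero_le_two _) hw0) one_pos, ?_⟩
  intro Cinf f g _ _ hf hbf hbg hbdd
  set M := (⨆ x : E2, ‖gradient f x‖) + ⨆ x : E2, ‖gradient g x‖
  set D := ⨆ p : E2 × E2, dd f g p.1 p.2
  have hM0 : 0 ≤ M := add_nonneg (Real.iSup_nonneg fun _ => norm_nonneg _)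
    (Real.iSup_nonneg fun _ => norm_nonneg _)
  have hD0 : 0 ≤ D := Real.iSup_nonneg fun _ => Real.rpow_nonneg (by positivity) _
  refine (lintegral_lintegral_ofReal_le_of_le_mul hf.integrable_sq
    (hw.const_mul (M * (2 ^ ((3 : ℝ) / 2) * (D ^ 3 + 1)))) (fun _ => sq_nonneg _)
    (fun y => by positivity) fun y x => interaction_integrand_le
      ((norm_sub_le _ _).trans (add_le_add (le_ciSup hbf x) (le_ciSup hbg (x - y))))
      (le_ciSup hbdd (x, y))).trans (ENNReal.ofReal_le_ofReal ?_)
  rw [integral_const_mul, ← l2norm_sq]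
  have hrest : 0 ≤ l2norm (fun x => f x - Cinf) ^ 2 * M * (D ^ 3 + 1) := by positivity
  nlinarith
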